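/- arXiv:1312.7513 — 8 statements merged into one kernel-verified Lean document; each statement's English description precedes it below -/
import Mathlib

section
/- Let a be a channel assignment and let a' be a channel assignment that differs from a only in the channel of a single user n₀ (i.e., a'(i) = a(i) for all i ≠ n₀). Then φ(a') − φ(a) = t_{n₀} · ( ψ_{n₀}(a') − ψ_{n₀}(a) ). -/
/-- Multi-channel ALOHA. If `a'` differs from `a` only in the channel of a
single user `n₀`, then `φ a' - φ a = t n₀ * (ψ n₀ a' - ψ n₀ a)`. -/
theorem potential_difference
    (N K : ℕ) (hN : 1 ≤ N) (hK : 1 ≤ K)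
    (P : Fin N → ℝ) (hP : ∀ n, P n ∈ Set.Ioo (0:ℝ) 1)
    (u : Fin N → Fin K → ℝ) (hu : ∀ n k, 0 < u n k)
    (t : Fin N → ℝ) (ht : ∀ n, t n = Real.log (1 / (1 - P n)))
    (L : (Fin N → Fin K) → Fin K → ℝ)
    (hL : ∀ a k, L a k = ∑ i ∈ Finset.univ.filter (fun i => a i = k), t i)
    (ψ : Fin N → (Fin N → Fin K) → ℝ)
    (hψ : ∀ n a, ψ n a = Real.log (u n (a n)) - L a (a n))
    (φ : (Fin N → Fin K) → ℝ)
    (hφ : ∀ a, φ a = ∑ n : Fin N, t n * (Real.log (u n (a n)) - (L a (a n) + t n) / 2))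
    (a a' : Fin N → Fin K) (n₀ : Fin N)
    (hdiff : ∀ i, i ≠ n₀ → a' i = a i) :
    φ a' - φ a = t n₀ * (ψ n₀ a' - ψ n₀ a) := by
  -- key load difference lemma
  have key : ∀ c, L a' c = L a c +
      t n₀ * ((if a' n₀ = c then (1:ℝ) else 0) - (if a n₀ = c then (1:ℝ) else 0)) := by
    intro c
    rw [hL, hL, Finset.sum_filter, Finset.sum_filter, ← sub_eq_iff_eq_add', ← Finset.sum_sub_distrib]
    rw [Finset.sum_eq_single n₀]
    · split_ifs <;> ring
    · intro i _ hi
      rw [hdiff i hi, sub_self]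
    · intro h; exact absurd (Finset.mem_univ n₀) h
  have hsum : ∀ c, (∑ n : Fin N, if c = a n then t n else 0) = L a c := by
    intro c
    rw [hL, Finset.sum_filter]
    exact Finset.sum_congr rfl fun i _ => if_congr eq_comm rfl rfl
  rw [hφ, hφ, ← Finset.sum_sub_distrib,
    ← Finset.sum_erase_add _ _ (Finset.mem_univ n₀)]
  have herase : ∀ n ∈ Finset.univ.erase n₀,
      (t n * (Real.log (u n (a' n)) - (L a' (a' n) + t n) / 2)
        - t n * (Real.log (u n (a n)) - (L a (a n) + t n) / 2))
      = (-(t n₀)/2) * ((if a' n₀ = a n then t n else 0) - (if a n₀ = a n then t n else 0)) := by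
    intro n hn
    have hne := Finset.ne_of_mem_erase hn
    rw [hdiff n hne, key (a n)]
    by_cases h1 : a' n₀ = a n <;> by_cases h2 : a n₀ = a n <;>
      simp [h1, h2, eq_comm] <;> ring
  rw [Finset.sum_congr rfl herase, ← Finset.mul_sum, Finset.sum_sub_distrib,
    Finset.sum_erase_eq_sub (f := fun n => if a' n₀ = a n then t n else 0) (Finset.mem_univ n₀),
    Finset.sum_erase_eq_sub (f := fun n => if a n₀ = a n then t n else 0) (Finset.mem_univ n₀),
    hsum, hsum, hψ, hψ, key (a' n₀)]
  by_cases h : a n₀ = a' n₀ <;> simp [h, eq_comm] <;> ring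
end

section
/- (Theorem 1) The function φ is an ordinal potential for the multi-channel ALOHA game: for every channel assignment a and every channel assignment a' that differs from a only in the channel of a single user n₀, one has R_{n₀}(a') > R_{n₀}(a) if and only if φ(a') > φ(a). -/
/-- Theorem 1: `φ` is an ordinal potential: for any unilateral deviation of a
single user `n₀`, `R n₀ a' > R n₀ a ↔ φ a' > φ a`. -/
theorem ordinal_potential
    (N K : ℕ) (hN : 1 ≤ N) (hK : 1 ≤ K)
    (P : Fin N → ℝ) (hP : ∀ n, P n ∈ Set.Ioo (0:ℝ) 1)
    (u : Fin N → Fin K → ℝ) (hu : ∀ n k, 0 < u n k)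
    (t : Fin N → ℝ) (ht : ∀ n, t n = Real.log (1 / (1 - P n)))
    (L : (Fin N → Fin K) → Fin K → ℝ)
    (hL : ∀ a k, L a k = ∑ i ∈ Finset.univ.filter (fun i => a i = k), t i)
    (R : Fin N → (Fin N → Fin K) → ℝ)
    (hR : ∀ n a, R n a =
      u n (a n) * P n * ∏ i ∈ Finset.univ.filter (fun i => i ≠ n ∧ a i = a n), (1 - P i))
    (φ : (Fin N → Fin K) → ℝ)
    (hφ : ∀ a, φ a = ∑ n : Fin N, t n * (Real.log (u n (a n)) - (L a (a n) + t n) / 2))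
    (a a' : Fin N → Fin K) (n₀ : Fin N)
    (hdiff : ∀ i, i ≠ n₀ → a' i = a i) :
    R n₀ a' > R n₀ a ↔ φ a' > φ a := by
  classical
  have hP0 : ∀ n, 0 < P n := fun n => (hP n).1
  have hP1 : ∀ n, 0 < 1 - P n := fun n => by linarith [(hP n).2]
  have htpos : ∀ n, 0 < t n := by
    intro n
    rw [ht n]
    apply Real.log_pos
    rw [lt_div_iff₀ (hP1 n)]
    nlinarith [hP0 n]
  have hte : ∀ n, t n = -Real.log (1 - P n) := by
    intro n
    rw [ht n, one_div, Real.log_inv]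
  have hRpos : ∀ b, 0 < R n₀ b := by
    intro b
    rw [hR]
    exact mul_pos (mul_pos (hu _ _) (hP0 _)) (Finset.prod_pos fun i _ => hP1 i)
  -- S j : total load on channel j from users other than n₀ (same for a and a')
  set S : Fin K → ℝ :=
    fun j => ∑ i ∈ Finset.univ.filter (fun i => i ≠ n₀ ∧ a i = j), t i with hS
  have hSj : ∀ j, S j = ∑ i : Fin N, if i ≠ n₀ ∧ a i = j then t i else 0 := by
    intro j
    simp only [hS]
    rw [Finset.sum_filter]
  -- sums over erase n₀
  have hSerase : ∀ j : Fin K,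
      (∑ i ∈ Finset.univ.erase n₀, (if j = a i then t i else 0)) = S j := by
    intro j
    rw [hSj j, ← Finset.filter_ne' Finset.univ n₀, Finset.sum_filter]
    apply Finset.sum_congr rfl
    intro i _
    by_cases h1 : i = n₀
    · simp [h1]
    · by_cases h2 : a i = j
      · simp [h1, h2]
      · simp [h1, h2, Ne.symm h2]
  -- log of rates
  have hlog : ∀ b : Fin N → Fin K, Real.log (R n₀ b) =
      Real.log (u n₀ (b n₀)) + Real.log (P n₀)
      + ∑ i ∈ Finset.univ.filter (fun i => i ≠ n₀ ∧ b i = b n₀), Real.log (1 - P i) := by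
    intro b
    rw [hR, Real.log_mul (mul_pos (hu _ _) (hP0 _)).ne' (Finset.prod_pos fun i _ => hP1 i).ne',
        Real.log_mul (hu _ _).ne' (hP0 _).ne', Real.log_prod]
    intro i _
    exact (hP1 i).ne'
  have hsumlog : ∀ j : Fin K,
      (∑ i ∈ Finset.univ.filter (fun i => i ≠ n₀ ∧ a i = j), Real.log (1 - P i)) = -S j := by
    intro j
    simp only [hS]
    rw [← Finset.sum_neg_distrib]
    apply Finset.sum_congr rfl
    intro i _
    rw [hte i]
    ring
  have hlogRa : Real.log (R n₀ a)
      = Real.log (u n₀ (a n₀)) + Real.log (P n₀) - S (a n₀) := by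
    rw [hlog a, hsumlog (a n₀)]
    ring
  have hfilter' : Finset.univ.filter (fun i => i ≠ n₀ ∧ a' i = a' n₀)
      = Finset.univ.filter (fun i => i ≠ n₀ ∧ a i = a' n₀) := by
    apply Finset.filter_congr
    intro i _
    constructor
    · rintro ⟨h1, h2⟩
      exact ⟨h1, by rw [← hdiff i h1]; exact h2⟩
    · rintro ⟨h1, h2⟩
      exact ⟨h1, by rw [hdiff i h1]; exact h2⟩
  have hlogRa' : Real.log (R n₀ a')
      = Real.log (u n₀ (a' n₀)) + Real.log (P n₀) - S (a' n₀) := by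
    rw [hlog a', hfilter', hsumlog (a' n₀)]
    ring
  -- decomposition of loads
  have hLdecomp : ∀ (b : Fin N → Fin K), (∀ i, i ≠ n₀ → b i = a i) → ∀ j : Fin K,
      L b j = S j + (if b n₀ = j then t n₀ else 0) := by
    intro b hb j
    rw [hL, Finset.sum_filter, hSj j]
    rw [show (if b n₀ = j then t n₀ else 0)
        = ∑ i : Fin N, (if i = n₀ then (if b n₀ = j then t n₀ else 0) else 0) by
      rw [Finset.sum_ite_eq' Finset.univ n₀]
      simp]
    rw [← Finset.sum_add_distrib]
    apply Finset.sum_congr rfl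
    intro i _
    by_cases h1 : i = n₀
    · subst h1
      simp
    · simp [h1, hb i h1]
  have hLa := hLdecomp a (fun _ _ => rfl)
  have hLa' := hLdecomp a' hdiff
  -- the key identity
  set C₀ : ℝ := t n₀ * ((Real.log (u n₀ (a' n₀)) - (S (a' n₀) + t n₀ + t n₀) / 2)
      - (Real.log (u n₀ (a n₀)) - (S (a n₀) + t n₀ + t n₀) / 2)) with hC₀
  have key : φ a' - φ a = t n₀ * (Real.log (R n₀ a') - Real.log (R n₀ a)) := by
    have step1 : φ a' - φ a = ∑ i : Fin N,
        (if i = n₀ then C₀ else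
          (t n₀ / 2) * ((if a n₀ = a i then t i else 0) - (if a' n₀ = a i then t i else 0))) := by
      rw [hφ, hφ, ← Finset.sum_sub_distrib]
      apply Finset.sum_congr rfl
      intro i _
      by_cases h1 : i = n₀
      · subst h1
        rw [hLa (a i), hLa' (a' i), if_pos rfl, if_pos rfl, if_pos rfl, hC₀]
        ring
      · rw [hLa (a i), hLa' (a' i), hdiff i h1, if_neg h1]
        by_cases h2 : a n₀ = a i <;> by_cases h3 : a' n₀ = a i <;>
          simp only [h2, h3, if_pos, if_neg, if_true, if_false, ite_true, ite_false] <;> ring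
    rw [step1, ← Finset.add_sum_erase _ _ (Finset.mem_univ n₀), if_pos rfl]
    have step2 : (∑ i ∈ Finset.univ.erase n₀,
        (if i = n₀ then C₀ else
          (t n₀ / 2) * ((if a n₀ = a i then t i else 0) - (if a' n₀ = a i then t i else 0))))
        = (t n₀ / 2) * (S (a n₀) - S (a' n₀)) := by
      rw [show (t n₀ / 2) * (S (a n₀) - S (a' n₀))
          = ∑ i ∈ Finset.univ.erase n₀,
            (t n₀ / 2) * ((if a n₀ = a i then t i else 0) - (if a' n₀ = a i then t i else 0)) by
        rw [← Finset.mul_sum, Finset.sum_sub_distrib, hSerase (a n₀), hSerase (a' n₀)]]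
      apply Finset.sum_congr rfl
      intro i hi
      rw [if_neg (Finset.ne_of_mem_erase hi)]
    rw [step2, hlogRa, hlogRa', hC₀]
    ring
  constructor
  · intro h
    have hlt : Real.log (R n₀ a) < Real.log (R n₀ a') := Real.log_lt_log (hRpos a) h
    nlinarith [htpos n₀]
  · intro h
    have hd : 0 < Real.log (R n₀ a') - Real.log (R n₀ a) := by
      by_contra hc
      push_neg at hc
      nlinarith [htpos n₀]
    calc R n₀ a = Real.exp (Real.log (R n₀ a)) := (Real.exp_log (hRpos a)).symm
      _ < Real.exp (Real.log (R n₀ a')) := Real.exp_lt_exp.mpr (by linarith)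
      _ = R n₀ a' := Real.exp_log (hRpos a')
end

section
/- (Corollary 1) There exists no infinite sequence a₀, a₁, a₂, … of channel assignments such that for every t, the assignment a_{t+1} differs from a_t in the channel of exactly one user n_t and R_{n_t}(a_{t+1}) > R_{n_t}(a_t); in other words, every sequence of unilateral strictly rate-improving deviations (in particular, any sequential best-response dynamics) terminates in finitely many steps. Consequently there exists a channel assignment a* that is a pure Nash equilibrium: for every user n and every channel k, R_n(a*) ≥ R_n(a*[n ↦ k]), where a*[n ↦ k] denotes a* with user n's channel changed to k. -/
/-!
With the weights `w i = -log (1 - P i) > 0` the rates satisfy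
`log R n a = log (u n (a n) * P n) - L n a`, where `L n a` is the total weight of the users
colliding with `n`. Since `∑ m, w m * L m a` counts every colliding pair `{i, j}` twice with the
symmetric weight `w i * w j`, the function
`Φ a = 2 ∑ m, w m * log (u m (a m) * P m) - ∑ m, w m * L m a` changes under a deviation of
user `n` by exactly `2 * w n` times the change of `log R n`.
So `Φ` strictly increases along an improvement path, which cannot go on forever on the finite set
of assignments, and a maximiser of `Φ` is a pure Nash equilibrium.
-/

open Finset Function

section PotentialGame

variable {ι α : Type*} [DecidableEq ι]

def IsOrdinalPotential (R : ι → (ι → α) → ℝ) (Φ : (ι → α) → ℝ) : Prop :=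
  ∀ a n k, R n a < R n (update a n k) → Φ a < Φ (update a n k)

def IsNashEquilibrium (R : ι → (ι → α) → ℝ) (a : ι → α) : Prop :=
  ∀ n k, R n (update a n k) ≤ R n a

variable {R : ι → (ι → α) → ℝ} {Φ : (ι → α) → ℝ}

theorem IsOrdinalPotential.not_exists_improvement_path [Finite ι] [Finite α]
    (hΦ : IsOrdinalPotential R Φ) :
    ¬ ∃ (seq : ℕ → ι → α) (user : ℕ → ι), ∀ τ,
      (∀ i, i ≠ user τ → seq (τ + 1) i = seq τ i) ∧
      R (user τ) (seq τ) < R (user τ) (seq (τ + 1)) := by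
  rintro ⟨seq, user, hstep⟩
  have hmono : StrictMono (Φ ∘ seq) := strictMono_nat_of_lt_succ fun τ => by
    obtain ⟨hfix, hlt⟩ := hstep τ
    have hupd : seq (τ + 1) = update (seq τ) (user τ) (seq (τ + 1) (user τ)) :=
      eq_update_iff.2 ⟨rfl, hfix⟩
    have := hΦ (seq τ) (user τ) (seq (τ + 1) (user τ))
    rw [← hupd] at this
    exact this hlt
  exact not_injective_infinite_finite seq hmono.injective.of_comp

theorem IsOrdinalPotential.exists_isNashEquilibrium [Finite ι] [Finite α] [Nonempty α]
    (hΦ : IsOrdinalPotential R Φ) : ∃ a, IsNashEquilibrium R a := by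
  obtain ⟨a, ha⟩ := Finite.exists_max Φ
  exact ⟨a, fun n k => not_lt.1 fun hlt => (hΦ a n k hlt).not_ge (ha _)⟩

end PotentialGame

section Sums

variable {ι M : Type*} [Fintype ι] [DecidableEq ι] [AddCommMonoid M]

theorem sum_sum_eq_two_nsmul_row_sum {D : ι → ι → M} (n : ι) (hsymm : ∀ i j, D i j = D j i)
    (hdiag : D n n = 0) (hoff : ∀ i j, i ≠ n → j ≠ n → D i j = 0) :
    ∑ i, ∑ j, D i j = 2 • ∑ j, D n j := by
  rw [← add_sum_erase _ _ (mem_univ n), two_nsmul]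
  congr 1
  calc ∑ i ∈ univ.erase n, ∑ j, D i j = ∑ i ∈ univ.erase n, D n i :=
        sum_congr rfl fun i hi => by
          rw [sum_eq_single n (fun j _ hj => hoff i j (ne_of_mem_erase hi) hj) (by simp), hsymm]
    _ = ∑ j, D n j := sum_erase _ hdiag

theorem sum_apply_update_sub {α β : Type*} [AddCommGroup β] (f : ι → α → β)
    (a : ι → α) (n : ι) (k : α) :
    ∑ m, f m (update a n k m) - ∑ m, f m (a m) = f n k - f n (a n) := by
  rw [← add_sum_erase _ _ (mem_univ n), ← add_sum_erase _ (fun m => f m (a m)) (mem_univ n),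
    update_self, sum_congr rfl fun m hm => by rw [update_of_ne (ne_of_mem_erase hm)]]
  abel

end Sums

section Collision

variable {ι α : Type*} [Fintype ι] [DecidableEq ι] [DecidableEq α]

def collisionLoad (w : ι → ℝ) (a : ι → α) (n : ι) : ℝ :=
  ∑ j ∈ univ.filter (fun j => j ≠ n ∧ a j = a n), w j

def collisionPotential (w : ι → ℝ) (c : ι → α → ℝ) (a : ι → α) : ℝ :=
  2 * ∑ m, w m * c m (a m) - ∑ m, w m * collisionLoad w a m

theorem mul_collisionLoad (w : ι → ℝ) (a : ι → α) (i : ι) :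
    w i * collisionLoad w a i = ∑ j, if j ≠ i ∧ a j = a i then w i * w j else 0 := by
  rw [collisionLoad, mul_sum, sum_filter]

theorem sum_mul_collisionLoad_update_sub (w : ι → ℝ) (a : ι → α) (n : ι) (k : α) :
    ∑ m, w m * collisionLoad w (update a n k) m - ∑ m, w m * collisionLoad w a m =
      2 * (w n * collisionLoad w (update a n k) n - w n * collisionLoad w a n) := by
  simp only [mul_collisionLoad, ← sum_sub_distrib]
  rw [sum_sum_eq_two_nsmul_row_sum n, nsmul_eq_mul, Nat.cast_ofNat]
  · intro i j
    simp only [ne_comm, eq_comm, mul_comm]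
  · simp
  · intro i j hi hj
    simp [update_of_ne hi, update_of_ne hj]

theorem collisionPotential_update_sub (w : ι → ℝ) (c : ι → α → ℝ) (a : ι → α) (n : ι) (k : α) :
    collisionPotential w c (update a n k) - collisionPotential w c a =
      2 * w n *
        ((c n k - collisionLoad w (update a n k) n) - (c n (a n) - collisionLoad w a n)) := by
  have hc := sum_apply_update_sub (fun m l => w m * c m l) a n k
  have hload := sum_mul_collisionLoad_update_sub w a n k
  rw [collisionPotential, collisionPotential]
  linear_combination 2 * hc - hload

theorem isOrdinalPotential_collisionPotential {w : ι → ℝ} {c : ι → α → ℝ}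
    {R : ι → (ι → α) → ℝ} (hw : ∀ n, 0 < w n) (hR : ∀ n a, 0 < R n a)
    (hlog : ∀ n a, Real.log (R n a) = c n (a n) - collisionLoad w a n) :
    IsOrdinalPotential R (collisionPotential w c) := by
  intro a n k hlt
  have hlog_lt := Real.log_lt_log (hR n a) hlt
  rw [hlog, hlog, update_self] at hlog_lt
  rw [← sub_pos, collisionPotential_update_sub]
  exact mul_pos (mul_pos two_pos (hw n)) (sub_pos.2 hlog_lt)

theorem log_aloha_rate {P : ι → ℝ} (hP : ∀ i, P i ∈ Set.Ioo (0 : ℝ) 1) {x : ℝ} (hx : 0 < x)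
    (a : ι → α) (n : ι) :
    Real.log (x * P n * ∏ i ∈ univ.filter (fun i => i ≠ n ∧ a i = a n), (1 - P i)) =
      Real.log x + Real.log (P n) - collisionLoad (fun i => -Real.log (1 - P i)) a n := by
  have hq : ∀ i, 0 < 1 - P i := fun i => sub_pos.2 (hP i).2
  rw [Real.log_mul (mul_pos hx (hP n).1).ne' (prod_pos fun i _ => hq i).ne',
    Real.log_mul hx.ne' (hP n).1.ne', Real.log_prod fun i _ => (hq i).ne', collisionLoad,
    sum_neg_distrib, sub_neg_eq_add]

end Collision

theorem finite_improvement_and_NEP_general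
    (N K : ℕ) (hK : 1 ≤ K)
    (P : Fin N → ℝ) (hP : ∀ n, P n ∈ Set.Ioo (0:ℝ) 1)
    (u : Fin N → Fin K → ℝ) (hu : ∀ n k, 0 < u n k)
    (R : Fin N → (Fin N → Fin K) → ℝ)
    (hR : ∀ n a, R n a =
      u n (a n) * P n * ∏ i ∈ Finset.univ.filter (fun i => i ≠ n ∧ a i = a n), (1 - P i)) :
    (¬ ∃ (seq : ℕ → Fin N → Fin K) (user : ℕ → Fin N),
        ∀ τ : ℕ,
          (∀ i, i ≠ user τ → seq (τ + 1) i = seq τ i) ∧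
          seq (τ + 1) (user τ) ≠ seq τ (user τ) ∧
          R (user τ) (seq τ) < R (user τ) (seq (τ + 1))) ∧
    (∃ astar : Fin N → Fin K, ∀ (n : Fin N) (k : Fin K),
        R n (Function.update astar n k) ≤ R n astar) := by
  have hw : ∀ i, 0 < -Real.log (1 - P i) := fun i =>
    neg_pos.2 (Real.log_neg (sub_pos.2 (hP i).2) (sub_lt_self 1 (hP i).1))
  have hRpos : ∀ n a, 0 < R n a := fun n a => by
    rw [hR]
    exact mul_pos (mul_pos (hu n (a n)) (hP n).1) (prod_pos fun i _ => sub_pos.2 (hP i).2)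
  have hpot : IsOrdinalPotential R
      (collisionPotential _ fun n k => Real.log (u n k) + Real.log (P n)) :=
    isOrdinalPotential_collisionPotential hw hRpos fun n a => by
      rw [hR, log_aloha_rate hP (hu n (a n))]
  have : Nonempty (Fin K) := ⟨⟨0, hK⟩⟩
  exact ⟨fun ⟨seq, user, hstep⟩ =>
      hpot.not_exists_improvement_path ⟨seq, user, fun τ => ⟨(hstep τ).1, (hstep τ).2.2⟩⟩,
    hpot.exists_isNashEquilibrium⟩

/-- Corollary 1: there is no infinite sequence of unilateral strictly
rate-improving deviations, and a pure Nash equilibrium exists. -/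
theorem finite_improvement_and_NEP
    (N K : ℕ) (hN : 1 ≤ N) (hK : 1 ≤ K)
    (P : Fin N → ℝ) (hP : ∀ n, P n ∈ Set.Ioo (0:ℝ) 1)
    (u : Fin N → Fin K → ℝ) (hu : ∀ n k, 0 < u n k)
    (R : Fin N → (Fin N → Fin K) → ℝ)
    (hR : ∀ n a, R n a =
      u n (a n) * P n * ∏ i ∈ Finset.univ.filter (fun i => i ≠ n ∧ a i = a n), (1 - P i)) :
    (¬ ∃ (seq : ℕ → Fin N → Fin K) (user : ℕ → Fin N),
        ∀ τ : ℕ,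
          (∀ i, i ≠ user τ → seq (τ + 1) i = seq τ i) ∧
          seq (τ + 1) (user τ) ≠ seq τ (user τ) ∧
          R (user τ) (seq τ) < R (user τ) (seq (τ + 1))) ∧
    (∃ astar : Fin N → Fin K, ∀ (n : Fin N) (k : Fin K),
        R n (Function.update astar n k) ≤ R n astar) :=
  finite_improvement_and_NEP_general N K hK P hP u hu R hR
end

section
/- (Theorem 3) Let M ≥ 2 users share a single collision channel with collision-free utilities u_n > 0, and let R_n(P) = u_n · P_n · Π_{i≠n}(1 − P_i) for P ∈ [0,1]^M. Then the Nash product Π_{n=1}^{M} R_n(P) (the Nash bargaining objective with disagreement point 0 for every user) attains its maximum over [0,1]^M at the unique point P_n = 1/M for all n; i.e., the equal-share probabilities 1/M achieve the Nash bargaining solution among the users sharing the channel. -/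
/-!
The Nash product factors: each `1 - P i` occurs in the rate of every user but `i`, so
`∏ₙ Rₙ(P) = ∏ₙ uₙ · Pₙ (1 - Pₙ)^(M-1)`, and it suffices to maximise each factor `p (1 - p)^(M-1)`
separately. Weighted AM-GM applied to `(M-1) p` (weight `1/M`) and `1 - p` (weight `(M-1)/M`),
whose weighted mean is `(M-1)/M` independently of `p`, shows that this factor is maximal
exactly at `p = 1/M`.
-/

open Finset

theorem Finset.prod_prod_filter_ne {ι M : Type*} [Fintype ι] [DecidableEq ι] [CommMonoid M]
    (f : ι → M) :
    ∏ n, ∏ i ∈ univ.filter (fun i => i ≠ n), f i = ∏ i, f i ^ (Fintype.card ι - 1) := by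
  rw [prod_comm' (t' := univ) (s' := fun i => univ.filter (fun n => i ≠ n)) (by simp [eq_comm])]
  refine prod_congr rfl fun i _ => ?_
  rw [prod_const, filter_ne, card_erase_of_mem (mem_univ i), card_univ]

theorem Finset.prod_lt_prod_of_nonneg {ι R : Type*} [CommMonoidWithZero R] [PartialOrder R]
    [ZeroLEOneClass R] [PosMulStrictMono R] [Nontrivial R] {s : Finset ι} {f g : ι → R}
    (hf : ∀ i ∈ s, 0 ≤ f i) (hg : ∀ i ∈ s, 0 < g i) (hfg : ∀ i ∈ s, f i ≤ g i)
    (hlt : ∃ i ∈ s, f i < g i) :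
    ∏ i ∈ s, f i < ∏ i ∈ s, g i := by
  by_cases hpos : ∀ i ∈ s, 0 < f i
  · exact prod_lt_prod hpos hfg hlt
  · obtain ⟨i, hi, hfi⟩ := not_forall₂.1 hpos
    rw [prod_eq_zero hi ((hf i hi).eq_of_not_lt hfi).symm]
    exact prod_pos hg

theorem prod_le_prod_const_of_forall_lt {ι α : Type*} [Fintype ι] {g : ι → α → ℝ} {S : Set α}
    {c : α} (hg : ∀ n, ∀ p ∈ S, 0 ≤ g n p) (hgc : ∀ n, 0 < g n c)
    (hlt : ∀ n, ∀ p ∈ S, p ≠ c → g n p < g n c) {P : ι → α} (hP : ∀ n, P n ∈ S) :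
    ∏ n, g n (P n) ≤ ∏ n, g n c ∧ (∏ n, g n (P n) = ∏ n, g n c → P = fun _ => c) := by
  have hle (n : ι) : g n (P n) ≤ g n c := by
    rcases eq_or_ne (P n) c with h | h
    · rw [h]
    · exact (hlt n _ (hP n) h).le
  refine ⟨prod_le_prod (fun n _ => hg n _ (hP n)) (fun n _ => hle n), fun heq => ?_⟩
  by_contra hne
  obtain ⟨j, hj⟩ := Function.ne_iff.1 hne
  exact (prod_lt_prod_of_nonneg (fun n _ => hg n _ (hP n)) (fun n _ => hgc n) (fun n _ => hle n)
    ⟨j, mem_univ j, hlt j _ (hP j) hj⟩).ne heq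

theorem Real.mul_pow_lt_add_mul_div_pow_of_ne {x y : ℝ} (hx : 0 ≤ x) (hy : 0 ≤ y) {k : ℕ}
    (hk : 0 < k) (hxy : x ≠ y) :
    x * y ^ k < ((x + k * y) / (k + 1)) ^ (k + 1) := by
  have hk1 : (0 : ℝ) < k + 1 := by positivity
  have hgm : x ^ (1 / (k + 1 : ℝ)) * y ^ (k / (k + 1 : ℝ)) < (x + k * y) / (k + 1) := by
    convert (Real.geom_mean_lt_arith_mean2_weighted_iff_of_pos (w₁ := 1 / (k + 1 : ℝ))
      (w₂ := k / (k + 1 : ℝ)) (by positivity) (by positivity) hx hy (by field_simp; ring)).2 hxy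
      using 1
    field_simp
  have hpow : (x ^ (1 / (k + 1 : ℝ)) * y ^ (k / (k + 1 : ℝ))) ^ (k + 1) = x * y ^ k := by
    rw [← Real.rpow_natCast, Real.mul_rpow (by positivity) (by positivity),
      ← Real.rpow_mul hx, ← Real.rpow_mul hy]
    push_cast
    rw [div_mul_cancel₀ _ hk1.ne', div_mul_cancel₀ _ hk1.ne', Real.rpow_one, Real.rpow_natCast]
  rw [← hpow]
  exact pow_lt_pow_left₀ hgm (by positivity) (by omega)

theorem mul_one_sub_pow_lt_of_ne {k : ℕ} (hk : 0 < k) {p : ℝ} (hp0 : 0 ≤ p) (hp1 : p ≤ 1)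
    (hp : p ≠ 1 / (k + 1)) :
    p * (1 - p) ^ k < 1 / (k + 1) * (1 - 1 / (k + 1)) ^ k := by
  have hk0 : (0 : ℝ) < k := by exact_mod_cast hk
  have hkp : (k : ℝ) * p ≠ 1 - p := fun h => hp (by field_simp; linarith)
  have amgm := Real.mul_pow_lt_add_mul_div_pow_of_ne (by positivity) (by linarith) hk hkp
  have hmax : ((k * p + k * (1 - p)) / (k + 1)) ^ (k + 1) =
      k * (1 / (k + 1) * (1 - 1 / (k + 1)) ^ k) := by
    rw [show (k * p + k * (1 - p) : ℝ) = k by ring,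
      show (1 - 1 / (k + 1) : ℝ) = k / (k + 1) by field_simp; ring]
    ring
  rw [hmax, mul_assoc] at amgm
  exact lt_of_mul_lt_mul_left amgm hk0.le

/-- Theorem 3: the Nash product `∏ R_n(P)` over `[0,1]^M` attains its
maximum at the unique point `P_n = 1/M` for all `n`. -/
theorem nash_product_max (M : ℕ) (hM : 2 ≤ M) (u : Fin M → ℝ) (hu : ∀ n, 0 < u n)
    (R : (Fin M → ℝ) → Fin M → ℝ)
    (hR : ∀ P n, R P n =
      u n * P n * ∏ i ∈ Finset.univ.filter (fun i => i ≠ n), (1 - P i)) :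
    (∀ P : Fin M → ℝ, (∀ n, P n ∈ Set.Icc (0:ℝ) 1) →
        ∏ n : Fin M, R P n ≤ ∏ n : Fin M, R (fun _ => 1 / (M : ℝ)) n) ∧
    (∀ P : Fin M → ℝ, (∀ n, P n ∈ Set.Icc (0:ℝ) 1) →
        ∏ n : Fin M, R P n = ∏ n : Fin M, R (fun _ => 1 / (M : ℝ)) n →
        P = fun _ => 1 / (M : ℝ)) := by
  obtain ⟨k, rfl⟩ : ∃ k, M = k + 1 := ⟨M - 1, by omega⟩
  have hk : 0 < k := by omega
  have hprod (P : Fin (k + 1) → ℝ) : ∏ n, R P n = ∏ n, u n * (P n * (1 - P n) ^ k) := by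
    simp_rw [hR, prod_mul_distrib, prod_prod_filter_ne, Fintype.card_fin, add_tsub_cancel_right,
      mul_assoc]
  have hmax_pos (n : Fin (k + 1)) : 0 < u n * (1 / (k + 1) * (1 - 1 / (k + 1)) ^ k) := by
    have : (0 : ℝ) < 1 - 1 / (k + 1) := by
      rw [sub_pos, div_lt_one (by positivity)]
      simpa using hk
    have := hu n
    positivity
  have key {P : Fin (k + 1) → ℝ} (hP : ∀ n, P n ∈ Set.Icc (0:ℝ) 1) :=
    prod_le_prod_const_of_forall_lt (g := fun n p => u n * (p * (1 - p) ^ k))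
      (fun n p hp => mul_nonneg (hu n).le (mul_nonneg hp.1 (pow_nonneg (sub_nonneg.2 hp.2) k)))
      hmax_pos
      (fun n p hp hne => mul_lt_mul_of_pos_left (mul_one_sub_pow_lt_of_ne hk hp.1 hp.2 hne) (hu n))
      hP
  have hc : 1 / ((k + 1 : ℕ) : ℝ) = 1 / (k + 1) := by push_cast; rfl
  simp_rw [hprod, hc]
  exact ⟨fun P hP => (key hP).1, fun P hP => (key hP).2⟩
end

section
/- For every integer M ≥ 2, all collision-free utilities u_n > 0, and all P ∈ (0,1)^M, the sum log rate satisfies Σ_{n=1}^{M} log( u_n · P_n · Π_{i≠n}(1 − P_i) ) ≤ Σ_{n=1}^{M} log u_n − M·log M + M·(M−1)·log(1 − 1/M). -/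
/-!
Each `1 - P i` occurs in the rates of the `M - 1` other users, so the sum of log rates separates
into `∑ log u n + ∑ (log P n + (M - 1) log (1 - P n))`, and each summand of the second sum is
maximal at `P n = 1 / M`.
-/

open Finset Real

lemma log_add_mul_log_one_sub_le {c p : ℝ} (hc : 1 < c) (hp : p ∈ Set.Ioo (0 : ℝ) 1) :
    log p + (c - 1) * log (1 - p) ≤ -log c + (c - 1) * log (1 - 1 / c) := by
  obtain ⟨hp0, hp1⟩ := hp
  have hc0 : 0 < c := by linarith
  have hq : 0 < 1 - 1 / c := by rw [sub_pos, div_lt_one hc0]; exact hc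
  have hp1' : 0 < 1 - p := by linarith
  -- `log x ≤ x - 1` at `x = c p` and at `x = (1 - p) / (1 - 1/c)`; the right-hand sides cancel.
  have hA := log_le_sub_one_of_pos (mul_pos hc0 hp0)
  have hB := log_le_sub_one_of_pos (div_pos hp1' hq)
  rw [log_mul hc0.ne' hp0.ne'] at hA
  rw [log_div hp1'.ne' hq.ne'] at hB
  have hcancel : (c * p - 1) + (c - 1) * ((1 - p) / (1 - 1 / c) - 1) = 0 := by
    have : c - 1 ≠ 0 := by linarith
    field_simp
    ring
  nlinarith [mul_le_mul_of_nonneg_left hB (by linarith : (0 : ℝ) ≤ c - 1)]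

lemma sum_log_mul_prod_ne {ι : Type*} [Fintype ι] [DecidableEq ι] (u P : ι → ℝ)
    (hu : ∀ n, 0 < u n) (hP : ∀ n, P n ∈ Set.Ioo (0 : ℝ) 1) :
    ∑ n, log (u n * P n * ∏ i ∈ univ.filter (fun i => i ≠ n), (1 - P i)) =
      ∑ n, log (u n) + ∑ n, (log (P n) + ((Fintype.card ι : ℝ) - 1) * log (1 - P n)) := by
  have hpos : ∀ i, 0 < 1 - P i := fun i => by linarith [(hP i).2]
  have hterm : ∀ n, log (u n * P n * ∏ i ∈ univ.filter (fun i => i ≠ n), (1 - P i)) =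
      log (u n) + log (P n) + (∑ i, log (1 - P i) - log (1 - P n)) := fun n => by
    rw [log_mul (mul_pos (hu n) (hP n).1).ne' (prod_pos fun i _ => hpos i).ne',
      log_mul (hu n).ne' (hP n).1.ne', log_prod fun i _ => (hpos i).ne', filter_ne',
      sum_erase_eq_sub (mem_univ n)]
  simp only [hterm, sum_add_distrib, sum_sub_distrib, ← mul_sum, sum_const, card_univ,
    nsmul_eq_mul]
  ring

/-- for all `P ∈ (0,1)^M`,
`∑ log (u_n P_n ∏_{i≠n} (1-P_i)) ≤ ∑ log u_n - M log M + M (M-1) log (1 - 1/M)`. -/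
theorem sum_log_rate_upper_bound (M : ℕ) (hM : 2 ≤ M) (u : Fin M → ℝ) (hu : ∀ n, 0 < u n)
    (P : Fin M → ℝ) (hP : ∀ n, P n ∈ Set.Ioo (0:ℝ) 1) :
    ∑ n : Fin M,
        Real.log (u n * P n * ∏ i ∈ Finset.univ.filter (fun i => i ≠ n), (1 - P i)) ≤
      ∑ n : Fin M, Real.log (u n) - (M : ℝ) * Real.log (M : ℝ) +
        (M : ℝ) * ((M : ℝ) - 1) * Real.log (1 - 1 / (M : ℝ)) := by
  have hM1 : (1 : ℝ) < M := by exact_mod_cast hM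
  have hbound := sum_le_sum fun n (_ : n ∈ univ) => log_add_mul_log_one_sub_le hM1 (hP n)
  rw [sum_log_mul_prod_ne u P hu hP, Fintype.card_fin]
  rw [sum_const, card_univ, Fintype.card_fin, nsmul_eq_mul] at hbound
  linarith
end

section
/- The function f(x) = −x·log x + x·(x−1)·log(1 − 1/x) is strictly concave on the interval [2, ∞) of real numbers (its second derivative is strictly negative there). -/
/-!
With `t = 1 / x`, two differentiations give `f'' x = 2 log (1 - t) + t / (1 - t)`, and
`log (1 - t) < -t` turns this into `f'' x < (2 - x) / (x (x - 1)) ≤ 0` for `x ≥ 2`.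
-/

open Real Set

noncomputable def sumLogRateGap (x : ℝ) : ℝ :=
  -x * log x + x * (x - 1) * log (1 - 1 / x)

lemma hasDerivAt_log_one_sub_one_div {x : ℝ} (hx₀ : x ≠ 0) (hx₁ : x ≠ 1) :
    HasDerivAt (fun y => log (1 - 1 / y)) (1 / (x * (x - 1))) x := by
  have hx₁' : x - 1 ≠ 0 := sub_ne_zero.mpr hx₁
  have hne : 1 - 1 / x ≠ 0 := by
    rw [one_sub_div hx₀]; exact div_ne_zero hx₁' hx₀
  have h := ((hasDerivAt_inv hx₀).const_sub 1).log (by rwa [← one_div])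
  simp only [← one_div] at h
  refine h.congr_deriv ?_
  field_simp

lemma hasDerivAt_sumLogRateGap {x : ℝ} (hx₀ : x ≠ 0) (hx₁ : x ≠ 1) :
    HasDerivAt sumLogRateGap ((2 * x - 1) * log (1 - 1 / x) - log x) x := by
  have hx₁' : x - 1 ≠ 0 := sub_ne_zero.mpr hx₁
  refine (((hasDerivAt_id' x).neg.mul (hasDerivAt_log hx₀)).add
    (((hasDerivAt_id' x).mul ((hasDerivAt_id' x).sub_const 1)).mul
      (hasDerivAt_log_one_sub_one_div hx₀ hx₁))).congr_deriv ?_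
  simp only [Pi.neg_apply, Pi.mul_apply]
  field_simp
  ring

lemma hasDerivAt_deriv_sumLogRateGap {x : ℝ} (hx₀ : x ≠ 0) (hx₁ : x ≠ 1) :
    HasDerivAt (fun y => (2 * y - 1) * log (1 - 1 / y) - log y)
      (2 * log (1 - 1 / x) + 1 / (x - 1)) x := by
  have hx₁' : x - 1 ≠ 0 := sub_ne_zero.mpr hx₁
  refine (((((hasDerivAt_id' x).const_mul 2).sub_const 1).mul
    (hasDerivAt_log_one_sub_one_div hx₀ hx₁)).sub (hasDerivAt_log hx₀)).congr_deriv ?_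
  field_simp
  ring

lemma two_mul_log_one_sub_one_div_add_one_div_lt_zero {x : ℝ} (hx : 2 ≤ x) :
    2 * log (1 - 1 / x) + 1 / (x - 1) < 0 := by
  have hx₀ : 0 < x := by linarith
  have hx₁ : 0 < x - 1 := by linarith
  have hlog : log (1 - 1 / x) < -(1 / x) := by
    have h := log_lt_sub_one_of_pos (x := 1 - 1 / x)
      (by rw [sub_pos, div_lt_one hx₀]; linarith) (by simpa using hx₀.ne')
    linarith
  have hbound : -(2 * (1 / x)) + 1 / (x - 1) = (2 - x) / (x * (x - 1)) := by
    field_simp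
    ring
  have hnonpos : (2 - x) / (x * (x - 1)) ≤ 0 :=
    div_nonpos_of_nonpos_of_nonneg (by linarith) (by positivity)
  linarith

/-- `f(x) = -x log x + x (x-1) log (1 - 1/x)` is strictly concave on `[2, ∞)`. -/
theorem f_strictConcave :
    StrictConcaveOn ℝ (Set.Ici (2:ℝ))
      (fun x => -x * Real.log x + x * (x - 1) * Real.log (1 - 1 / x)) := by
  show StrictConcaveOn ℝ (Ici 2) sumLogRateGap
  refine strictConcaveOn_of_deriv2_neg (convex_Ici 2) (fun x hx => ?_) (fun x hx => ?_)
  · have hx₁ : (1 : ℝ) < x := by linarith [mem_Ici.mp hx]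
    exact (hasDerivAt_sumLogRateGap (one_pos.trans hx₁).ne' hx₁.ne').continuousAt.continuousWithinAt
  · rw [interior_Ici, mem_Ioi] at hx
    have hx₁ : (1 : ℝ) < x := by linarith
    have hderiv : deriv sumLogRateGap =ᶠ[nhds x]
        fun y => (2 * y - 1) * log (1 - 1 / y) - log y := by
      filter_upwards [Ioi_mem_nhds hx₁] with y hy
      exact (hasDerivAt_sumLogRateGap (one_pos.trans hy).ne' (ne_of_gt hy)).deriv
    rw [Function.iterate_succ_apply, Function.iterate_one, hderiv.deriv_eq,
      (hasDerivAt_deriv_sumLogRateGap (one_pos.trans hx₁).ne' hx₁.ne').deriv]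
    exact two_mul_log_one_sub_one_div_add_one_div_lt_zero hx.le
end

section
/- Let N ≥ 1 users share K ≥ 1 channels via a channel assignment a : {1,…,N} → {1,…,K} in which every channel is used by at least 2 users, let P ∈ (0,1)^N be transmission probabilities, let u_n(k) > 0 be collision-free utilities, and let R_n(a) = u_n(a(n)) · P_n · Π_{i≠n, a(i)=a(n)}(1 − P_i). Then the sum log rate of the network satisfies Σ_{n=1}^{N} log R_n(a) ≤ Σ_{n=1}^{N} max_{k} log u_n(k) + N·log(K/N) + N·(N/K − 1)·log(1 − K/N). -/
open Finset Real

/-!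
On a channel carrying `m` users, the sum of their `log P n + ∑_{i ≠ n} log (1 - P i)` regroups as
`∑ n, (log P n + (m - 1) log (1 - P n))`, and each summand is at most its value at `P n = 1 / m`;
so the channel contributes at most `f m := alohaChannelBound m`. The channel sizes sum to `N`, so
concavity of `f` on `[2, ∞)` and Jensen give `∑ k, f (m k) ≤ K f (N / K)`, which is the closed
form in the statement.
-/

lemma ConcaveOn.sum_le_card_mul_map_sum_div_card {ι : Type*} {s : Set ℝ} {f : ℝ → ℝ}
    (hf : ConcaveOn ℝ s f) {t : Finset ι} (ht : t.Nonempty) {x : ι → ℝ}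
    (hx : ∀ i ∈ t, x i ∈ s) :
    ∑ i ∈ t, f (x i) ≤ #t * f ((∑ i ∈ t, x i) / #t) := by
  have hcard : (0 : ℝ) < #t := by exact_mod_cast ht.card_pos
  have hjensen := hf.le_map_sum (w := fun _ => (#t : ℝ)⁻¹) (fun _ _ => by positivity)
    (by rw [sum_const, nsmul_eq_mul, mul_inv_cancel₀ hcard.ne']) hx
  simp only [smul_eq_mul, inv_mul_eq_div, ← sum_div] at hjensen
  rwa [div_le_iff₀' hcard] at hjensen

/-- Summing the tangent-line bounds `log y ≤ y - 1` at `y = m p` and `y = m (1 - p) / (m - 1)`,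
weighted `1` and `m - 1`, the right-hand sides cancel. -/
lemma log_add_mul_log_one_sub_le_s15 {p m : ℝ} (hp₀ : 0 < p) (hp₁ : p < 1) (hm : 1 < m) :
    log p + (m - 1) * log (1 - p) ≤ (m - 1) * log (m - 1) - m * log m := by
  have hm₀ : 0 < m := by linarith
  have hm₁ : 0 < m - 1 := by linarith
  have hq : 0 < 1 - p := by linarith
  have hmp := log_le_sub_one_of_pos (mul_pos hm₀ hp₀)
  have hmq := log_le_sub_one_of_pos (div_pos (mul_pos hm₀ hq) hm₁)
  rw [log_mul hm₀.ne' hp₀.ne'] at hmp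
  rw [log_div (mul_pos hm₀ hq).ne' hm₁.ne', log_mul hm₀.ne' hq.ne'] at hmq
  have hmq' := mul_le_mul_of_nonneg_left hmq hm₁.le
  rw [mul_sub_one (m - 1), mul_div_cancel₀ _ hm₁.ne'] at hmq'
  nlinarith

/-- The largest sum log rate of `m` users sharing one channel, attained at `P = 1 / m`; it equals
the paper's `-m log m + m (m - 1) log (1 - 1 / m)`. -/
noncomputable def alohaChannelBound (m : ℝ) : ℝ :=
  m * (m - 1) * log (m - 1) - m ^ 2 * log m

lemma hasDerivAt_alohaChannelBound {x : ℝ} (hx : 1 < x) :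
    HasDerivAt alohaChannelBound ((2 * x - 1) * log (x - 1) - 2 * x * log x) x := by
  have hx₀ : x ≠ 0 := by positivity
  have hx₁ : x - 1 ≠ 0 := by linarith
  have hsub : HasDerivAt (fun y : ℝ => y - 1) 1 x := (hasDerivAt_id x).sub_const 1
  have h : HasDerivAt alohaChannelBound _ x :=
    (((hasDerivAt_id x).mul hsub).mul (hsub.log hx₁)).sub
      ((hasDerivAt_pow 2 x).mul (hasDerivAt_log hx₀))
  convert h using 1
  simp only [id_eq, Pi.mul_apply]
  field_simp
  ring

lemma hasDerivAt_deriv_alohaChannelBound {x : ℝ} (hx : 1 < x) :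
    HasDerivAt (fun y => (2 * y - 1) * log (y - 1) - 2 * y * log y)
      (2 * log (x - 1) - 2 * log x + 1 / (x - 1)) x := by
  have hx₀ : x ≠ 0 := by positivity
  have hx₁ : x - 1 ≠ 0 := by linarith
  have hlin : HasDerivAt (fun y : ℝ => 2 * y) 2 x := by
    simpa using (hasDerivAt_id x).const_mul 2
  have h : HasDerivAt (fun y => (2 * y - 1) * log (y - 1) - 2 * y * log y) _ x :=
    ((hlin.sub_const 1).mul (((hasDerivAt_id x).sub_const 1).log hx₁)).sub
      (hlin.mul (hasDerivAt_log hx₀))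
  convert h using 1
  simp only [id_eq]
  field_simp
  ring

lemma alohaChannelBound_concaveOn : ConcaveOn ℝ (Set.Ici 2) alohaChannelBound := by
  refine concaveOn_of_hasDerivWithinAt2_nonpos (convex_Ici 2)
    (f' := fun x => (2 * x - 1) * log (x - 1) - 2 * x * log x)
    (f'' := fun x => 2 * log (x - 1) - 2 * log x + 1 / (x - 1))
    (fun x hx => (hasDerivAt_alohaChannelBound (by simp at hx; linarith)).continuousAt
      |>.continuousWithinAt) ?_ ?_ ?_
  all_goals simp only [interior_Ici, Set.mem_Ioi]
  · exact fun x hx => (hasDerivAt_alohaChannelBound (by linarith)).hasDerivWithinAt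
  · exact fun x hx => (hasDerivAt_deriv_alohaChannelBound (by linarith)).hasDerivWithinAt
  · intro x hx
    have hx₀ : 0 < x := by linarith
    have hx₁ : 0 < x - 1 := by linarith
    -- `f'' x = 2 log (1 - 1 / x) + 1 / (x - 1) ≤ -2 / x + 1 / (x - 1) = (2 - x) / (x (x - 1))`
    have hlog := log_le_sub_one_of_pos (div_pos hx₁ hx₀)
    rw [log_div hx₁.ne' hx₀.ne'] at hlog
    have hrat : 2 * ((x - 1) / x - 1) + 1 / (x - 1) ≤ 0 := by
      rw [div_sub_one hx₀.ne', ← sub_nonneg]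
      field_simp
      nlinarith
    linarith

lemma card_mul_alohaChannelBound_div {k n : ℝ} (hk : 0 < k) (hkn : k < n) :
    k * alohaChannelBound (n / k) =
      n * log (k / n) + n * (n / k - 1) * log (1 - k / n) := by
  have hn : 0 < n := hk.trans hkn
  have hnk : 0 < n - k := by linarith
  rw [alohaChannelBound, div_sub_one hk.ne', one_sub_div hn.ne', log_div hnk.ne' hk.ne',
    log_div hn.ne' hk.ne', log_div hk.ne' hn.ne', log_div hnk.ne' hn.ne']
  field_simp
  ring

lemma sum_log_mul_prod_erase_le {ι : Type*} [DecidableEq ι] {s : Finset ι} (hs : 2 ≤ #s)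
    {P : ι → ℝ} (hP : ∀ i ∈ s, P i ∈ Set.Ioo 0 1) :
    ∑ n ∈ s, log (P n * ∏ i ∈ s.erase n, (1 - P i)) ≤ alohaChannelBound #s := by
  have hq : ∀ i ∈ s, 1 - P i ≠ 0 := fun i hi => by linarith [(hP i hi).2]
  have hm : (1 : ℝ) < #s := by exact_mod_cast hs
  calc ∑ n ∈ s, log (P n * ∏ i ∈ s.erase n, (1 - P i))
      = ∑ n ∈ s, (log (P n) + ((#s : ℝ) - 1) * log (1 - P n)) := by
        have hsplit : ∀ n ∈ s, log (P n * ∏ i ∈ s.erase n, (1 - P i)) =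
            log (P n) + (∑ i ∈ s, log (1 - P i) - log (1 - P n)) := fun n hn => by
          rw [log_mul (hP n hn).1.ne' (prod_ne_zero_iff.2 fun i hi => hq i (mem_of_mem_erase hi)),
            log_prod fun i hi => hq i (mem_of_mem_erase hi), sum_erase_eq_sub hn]
        rw [sum_congr rfl hsplit, sum_add_distrib, sum_add_distrib, sum_sub_distrib, sum_const,
          nsmul_eq_mul, ← mul_sum, sub_one_mul]
    _ ≤ ∑ _n ∈ s, (((#s : ℝ) - 1) * log ((#s : ℝ) - 1) - #s * log #s) :=
        sum_le_sum fun n hn => log_add_mul_log_one_sub_le_s15 (hP n hn).1 (hP n hn).2 hm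
    _ = alohaChannelBound #s := by
        rw [sum_const, nsmul_eq_mul, alohaChannelBound]
        ring

theorem network_sum_log_rate_bound_general
    (N K : ℕ) (hK : 1 ≤ K)
    (a : Fin N → Fin K)
    (ha : ∀ k : Fin K, 2 ≤ (Finset.univ.filter (fun n => a n = k)).card)
    (P : Fin N → ℝ) (hP : ∀ n, P n ∈ Set.Ioo (0:ℝ) 1)
    (u : Fin N → Fin K → ℝ) (hu : ∀ n k, 0 < u n k) :
    ∑ n : Fin N,
        Real.log (u n (a n) * P n *
          ∏ i ∈ Finset.univ.filter (fun i => i ≠ n ∧ a i = a n), (1 - P i)) ≤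
      (∑ n : Fin N,
        Finset.univ.sup' ⟨⟨0, hK⟩, Finset.mem_univ _⟩ (fun k => Real.log (u n k))) +
      (N : ℝ) * Real.log ((K : ℝ) / (N : ℝ)) +
      (N : ℝ) * ((N : ℝ) / (K : ℝ) - 1) * Real.log (1 - (K : ℝ) / (N : ℝ)) := by
  set S : Fin K → Finset (Fin N) := fun k => univ.filter fun n => a n = k
  set G : Fin K → Fin N → ℝ := fun k n => log (P n * ∏ i ∈ (S k).erase n, (1 - P i))
  have hsplit (n : Fin N) : log (u n (a n) * P n *
      ∏ i ∈ univ.filter (fun i => i ≠ n ∧ a i = a n), (1 - P i)) =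
      log (u n (a n)) + G (a n) n := by
    have hfilter : univ.filter (fun i => i ≠ n ∧ a i = a n) = (S (a n)).erase n := by
      ext i
      simp [S]
    have hq : ∀ i ∈ (S (a n)).erase n, 0 < 1 - P i := fun i _ => sub_pos.2 (hP i).2
    rw [hfilter, mul_assoc, log_mul (hu n (a n)).ne' (mul_pos (hP n).1 (prod_pos hq)).ne']
  have hchannels : ∑ n, G (a n) n ≤ ∑ k, alohaChannelBound #(S k) := by
    rw [← sum_fiberwise univ a fun n => G (a n) n]
    refine sum_le_sum fun k _ => ?_
    rw [sum_congr rfl fun n hn => by rw [(mem_filter.1 hn).2]]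
    exact sum_log_mul_prod_erase_le (ha k) fun i _ => hP i
  have hcard : ∑ k, (#(S k) : ℝ) = N := by
    rw [← Nat.cast_sum, ← card_eq_sum_card_fiberwise fun n _ => mem_univ (a n), card_univ,
      Fintype.card_fin]
  have h2 (k : Fin K) : (2 : ℝ) ≤ #(S k) := by exact_mod_cast ha k
  have h2K : 2 * (K : ℝ) ≤ N := by
    simpa [mul_comm, ← hcard] using sum_le_sum fun k (_ : k ∈ univ) => h2 k
  have hjensen := alohaChannelBound_concaveOn.sum_le_card_mul_map_sum_div_card
    (univ_nonempty_iff.2 ⟨⟨0, hK⟩⟩) (x := fun k => (#(S k) : ℝ)) fun k _ => h2 k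
  have hK₀ : (0 : ℝ) < K := by exact_mod_cast hK
  rw [hcard, card_univ, Fintype.card_fin,
    card_mul_alohaChannelBound_div hK₀ (by linarith)] at hjensen
  rw [sum_congr rfl fun n _ => hsplit n, sum_add_distrib, add_assoc]
  exact add_le_add (sum_le_sum fun n _ => le_sup' (fun k => log (u n k)) (mem_univ (a n)))
    (hchannels.trans hjensen)

/-- network sum log rate upper bound when every channel carries at least two
users:
`∑ log R_n(a) ≤ ∑ max_k log u_n(k) + N log (K/N) + N (N/K - 1) log (1 - K/N)`. -/
theorem network_sum_log_rate_bound
    (N K : ℕ) (hN : 1 ≤ N) (hK : 1 ≤ K)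
    (a : Fin N → Fin K)
    (ha : ∀ k : Fin K, 2 ≤ (Finset.univ.filter (fun n => a n = k)).card)
    (P : Fin N → ℝ) (hP : ∀ n, P n ∈ Set.Ioo (0:ℝ) 1)
    (u : Fin N → Fin K → ℝ) (hu : ∀ n k, 0 < u n k) :
    ∑ n : Fin N,
        Real.log (u n (a n) * P n *
          ∏ i ∈ Finset.univ.filter (fun i => i ≠ n ∧ a i = a n), (1 - P i)) ≤
      (∑ n : Fin N,
        Finset.univ.sup' ⟨⟨0, hK⟩, Finset.mem_univ _⟩ (fun k => Real.log (u n k))) +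
      (N : ℝ) * Real.log ((K : ℝ) / (N : ℝ)) +
      (N : ℝ) * ((N : ℝ) / (K : ℝ) - 1) * Real.log (1 - (K : ℝ) / (N : ℝ)) :=
  network_sum_log_rate_bound_general N K hK a ha P hP u hu
end

section
/- Let ε_p ∈ (0,1), let N ≥ 1 be an integer, let K ≥ 1 be an integer, and let u, p̃, v : {1,…,K} → ℝ satisfy u(k) > 0, ε_p ≤ p̃(k) ≤ 1 − e^{−1}, and ε_p^{N−1} ≤ v(k) ≤ 1 for all k. Define the potential rates R̃(k) = p̃(k)·u(k)·v(k) and the threshold δ* = ( (1 − e^{−1}) · max_k u(k) ) / ( ε_p^N · min_k u(k) ). Then for every channel k* one has max_k R̃(k) < (1 + δ*) · R̃(k*); consequently, a user whose switching threshold δ_R exceeds δ* never switches channels in the sequential updating algorithm. -/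
/-- with potential rates `R̃(k) = p̃(k) u(k) v(k)` and threshold
`δ* = ((1 - e⁻¹) max_k u(k)) / (ε_p^N min_k u(k))`, for every channel `k*` one has
`max_k R̃(k) < (1 + δ*) R̃(k*)`. -/
theorem no_switch_above_threshold
    (εp : ℝ) (hεp : εp ∈ Set.Ioo (0:ℝ) 1) (N K : ℕ) (hN : 1 ≤ N) (hK : 1 ≤ K)
    (u ptil v : Fin K → ℝ)
    (hu : ∀ k, 0 < u k)
    (hptil : ∀ k, εp ≤ ptil k ∧ ptil k ≤ 1 - Real.exp (-1))
    (hv : ∀ k, εp ^ (N - 1) ≤ v k ∧ v k ≤ 1) :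
    ∀ kstar : Fin K,
      Finset.univ.sup' ⟨⟨0, hK⟩, Finset.mem_univ _⟩ (fun k => ptil k * u k * v k) <
        (1 + ((1 - Real.exp (-1)) *
              Finset.univ.sup' ⟨⟨0, hK⟩, Finset.mem_univ _⟩ u) /
            (εp ^ N * Finset.univ.inf' ⟨⟨0, hK⟩, Finset.mem_univ _⟩ u)) *
          (ptil kstar * u kstar * v kstar) := by
  intro kstar
  obtain ⟨hεp0, hεp1⟩ := hεp
  have ne : (Finset.univ : Finset (Fin K)).Nonempty := ⟨⟨0, hK⟩, Finset.mem_univ _⟩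
  set M := Finset.univ.sup' ne u with hM
  set m := Finset.univ.inf' ne u with hm
  have hm0 : 0 < m := by
    rw [hm, Finset.lt_inf'_iff]
    exact fun k _ => hu k
  have hmM : ∀ k, m ≤ u k ∧ u k ≤ M := fun k =>
    ⟨Finset.inf'_le _ (Finset.mem_univ k), Finset.le_sup' _ (Finset.mem_univ k)⟩
  have hM0 : 0 < M := lt_of_lt_of_le hm0 (le_trans (hmM ⟨0, hK⟩).1 (hmM ⟨0, hK⟩).2)
  have he : 0 < 1 - Real.exp (-1) := by
    have : Real.exp (-1) < 1 := by
      rw [Real.exp_lt_one_iff]; norm_num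
    linarith
  have hεpN : 0 < εp ^ N := pow_pos hεp0 N
  have hRstar : εp ^ N * m ≤ ptil kstar * u kstar * v kstar := by
    have h1 : εp ^ N = εp * εp ^ (N - 1) := by
      rw [← pow_succ']
      congr 1
      omega
    rw [h1]
    have hv0 : (0:ℝ) ≤ εp ^ (N-1) := le_of_lt (pow_pos hεp0 _)
    calc εp * εp ^ (N-1) * m = εp * m * εp ^ (N-1) := by ring
    _ ≤ ptil kstar * u kstar * v kstar := by
        apply mul_le_mul
        · exact mul_le_mul (hptil kstar).1 (hmM kstar).1 hm0.le
            (le_trans hεp0.le (hptil kstar).1)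
        · exact (hv kstar).1
        · exact hv0
        · exact mul_nonneg (le_trans hεp0.le (hptil kstar).1) (hu kstar).le
  have hRstar0 : 0 < ptil kstar * u kstar * v kstar :=
    lt_of_lt_of_le (mul_pos hεpN hm0) hRstar
  have hsup : Finset.univ.sup' ne (fun k => ptil k * u k * v k) ≤ (1 - Real.exp (-1)) * M := by
    rw [Finset.sup'_le_iff]
    intro k _
    have hpk := hptil k
    have hvk := hv k
    have hp0 : 0 ≤ ptil k := le_trans hεp0.le hpk.1
    calc ptil k * u k * v k ≤ ptil k * u k * 1 := by
          apply mul_le_mul_of_nonneg_left hvk.2 (mul_nonneg hp0 (hu k).le)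
    _ = ptil k * u k := by ring
    _ ≤ (1 - Real.exp (-1)) * M :=
        mul_le_mul hpk.2 (hmM k).2 (hu k).le he.le
  have hδ : (1 - Real.exp (-1)) * M ≤
      ((1 - Real.exp (-1)) * M) / (εp ^ N * m) * (ptil kstar * u kstar * v kstar) := by
    rw [div_mul_eq_mul_div, le_div_iff₀ (mul_pos hεpN hm0)]
    apply mul_le_mul_of_nonneg_left hRstar (mul_nonneg he.le hM0.le)
  calc Finset.univ.sup' ne (fun k => ptil k * u k * v k) ≤ (1 - Real.exp (-1)) * M := hsup
  _ < ptil kstar * u kstar * v kstar +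
      ((1 - Real.exp (-1)) * M) / (εp ^ N * m) * (ptil kstar * u kstar * v kstar) := by
        linarith
  _ = (1 + ((1 - Real.exp (-1)) * M) / (εp ^ N * m)) * (ptil kstar * u kstar * v kstar) := by
        ring
end
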